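/- Let $f_1, \dots, f_n : \mathbb{R}^p \to \mathbb{R}$ each be convex and $L$-smooth, set $g = \frac{1}{n}\sum_{i=1}^n f_i$, and let $x_\star$ satisfy $\nabla g(x_\star) = 0$. Then for all $x \in \mathbb{R}^p$, $\frac{1}{n}\sum_{i=1}^n \left( -2L (x - x_\star)^\top \nabla f_i(x) + \|\nabla f_i(x)\|^2 \right) \le \frac{2}{n}\sum_{i=1}^n \|\nabla f_i(x_\star)\|^2$. -/

import Mathlib

open RealInnerProductSpace Finset

variable {E : Type*} [NormedAddCommGroup E] [InnerProductSpace ℝ E] [CompleteSpace E]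

/-- Descent lemma: L-Lipschitz gradient gives quadratic upper bound. -/
lemma descent {f : E → ℝ} {f' : E → E} {L : ℝ}
    (hdiff : ∀ x, HasGradientAt f (f' x) x) (hL : 0 ≤ L)
    (hsmooth : ∀ x y, ‖f' x - f' y‖ ≤ L * ‖x - y‖) (x y : E) :
    f x ≤ f y + ⟪f' y, x - y⟫ + L / 2 * ‖x - y‖ ^ 2 := by
  set d := x - y with hd
  set h : ℝ → ℝ := fun t => f (y + t • d) - t * ⟪f' y, d⟫ - L / 2 * t ^ 2 * ‖d‖ ^ 2 with hh
  have hderiv : ∀ t : ℝ, HasDerivAt h (⟪f' (y + t • d), d⟫ - ⟪f' y, d⟫ - L * t * ‖d‖ ^ 2) t := by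
    intro t
    have h1 : HasDerivAt (fun t : ℝ => y + t • d) d t := by
      simpa using ((hasDerivAt_id t).smul_const d).const_add y
    have h2 : HasDerivAt (fun t : ℝ => f (y + t • d)) (⟪f' (y + t • d), d⟫) t := by
      have := ((hdiff (y + t • d)).hasFDerivAt.comp_hasDerivAt t h1)
      exact this
    have h3 : HasDerivAt (fun t : ℝ => t * ⟪f' y, d⟫) (⟪f' y, d⟫) t := by
      simpa using (hasDerivAt_id t).mul_const _
    have h4 : HasDerivAt (fun t : ℝ => L / 2 * t ^ 2 * ‖d‖ ^ 2) (L * t * ‖d‖ ^ 2) t := by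
      have : HasDerivAt (fun t : ℝ => t ^ 2) (2 * t) t := by
        simpa using hasDerivAt_pow 2 t
      have := (this.const_mul (L / 2)).mul_const (‖d‖ ^ 2)
      exact this.congr_deriv (by ring)
    exact (h2.sub h3).sub h4
  have hanti : AntitoneOn h (Set.Icc (0:ℝ) 1) := by
    apply antitoneOn_of_deriv_nonpos (convex_Icc 0 1)
    · exact fun t _ => ((hderiv t).continuousAt).continuousWithinAt
    · exact fun t _ => ((hderiv t).differentiableAt).differentiableWithinAt
    · intro t ht
      rw [interior_Icc] at ht
      rw [(hderiv t).deriv]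
      have hCS : ⟪f' (y + t • d) - f' y, d⟫ ≤ ‖f' (y + t • d) - f' y‖ * ‖d‖ :=
        real_inner_le_norm _ _
      have hlip : ‖f' (y + t • d) - f' y‖ ≤ L * (t * ‖d‖) := by
        have := hsmooth (y + t • d) y
        simpa [norm_smul, abs_of_pos ht.1, mul_assoc] using this
      have : ⟪f' (y + t • d), d⟫ - ⟪f' y, d⟫ ≤ L * t * ‖d‖ ^ 2 := by
        rw [← inner_sub_left]
        calc ⟪f' (y + t • d) - f' y, d⟫ ≤ ‖f' (y + t • d) - f' y‖ * ‖d‖ := hCS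
          _ ≤ L * (t * ‖d‖) * ‖d‖ := by
              apply mul_le_mul_of_nonneg_right hlip (norm_nonneg _)
          _ = L * t * ‖d‖ ^ 2 := by ring
      linarith
  have := hanti (Set.left_mem_Icc.2 zero_le_one) (Set.right_mem_Icc.2 zero_le_one) zero_le_one
  simp only [hh] at this
  have hxy : y + (1:ℝ) • d = x := by simp [hd]
  rw [hxy] at this
  simp at this
  linarith

/-- Co-coercivity. -/
lemma cocoercive {f : E → ℝ} {f' : E → E} {L : ℝ}
    (hdiff : ∀ x, HasGradientAt f (f' x) x) (hL : 0 < L)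
    (hconv : ∀ x y, f x ≥ f y + ⟪f' y, x - y⟫)
    (hsmooth : ∀ x y, ‖f' x - f' y‖ ≤ L * ‖x - y‖) (x y : E) :
    ‖f' x - f' y‖ ^ 2 ≤ L * ⟪f' x - f' y, x - y⟫ := by
  -- key: for all a b: (1/(2L)) ‖f' a - f' b‖² ≤ f a - f b - ⟪f' b, a - b⟫
  have key : ∀ a b : E, (1 / (2 * L)) * ‖f' a - f' b‖ ^ 2 ≤ f a - f b - ⟪f' b, a - b⟫ := by
    intro a b
    set z := a - (L⁻¹) • (f' a - f' b) with hz
    have h1 : f z ≥ f b + ⟪f' b, z - b⟫ := hconv z b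
    have h2 : f z ≤ f a + ⟪f' a, z - a⟫ + L / 2 * ‖z - a‖ ^ 2 :=
      descent hdiff hL.le hsmooth z a
    have hza : z - a = -(L⁻¹) • (f' a - f' b) := by rw [hz]; module
    rw [hza] at h2
    rw [real_inner_smul_right, norm_smul] at h2
    have hinner : ⟪f' a, f' a - f' b⟫ = ⟪f' a - f' b, f' a - f' b⟫ + ⟪f' b, f' a - f' b⟫ := by
      rw [← inner_add_left]; congr 1; abel
    have hnorm : ⟪f' a - f' b, f' a - f' b⟫ = ‖f' a - f' b‖ ^ 2 := real_inner_self_eq_norm_sq _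
    have hzb : ⟪f' b, z - b⟫ = ⟪f' b, a - b⟫ - L⁻¹ * ⟪f' b, f' a - f' b⟫ := by
      rw [hz]
      rw [show a - L⁻¹ • (f' a - f' b) - b = (a - b) + (-(L⁻¹)) • (f' a - f' b) by module]
      rw [inner_add_right, real_inner_smul_right]; ring
    rw [hzb] at h1
    have hLpos := hL
    have : ‖(-(L⁻¹) : ℝ)‖ = L⁻¹ := by
      rw [norm_neg, Real.norm_eq_abs, abs_of_pos (inv_pos.2 hL)]
    rw [this] at h2
    have h2' : f z ≤ f a - L⁻¹ * ⟪f' a - f' b, f' a - f' b⟫ - L⁻¹ * ⟪f' b, f' a - f' b⟫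
        + L / 2 * (L⁻¹ * ‖f' a - f' b‖) ^ 2 := by
      rw [hinner] at h2; linarith [h2]
    have hfield : L / 2 * (L⁻¹ * ‖f' a - f' b‖) ^ 2 = 1 / (2 * L) * ‖f' a - f' b‖ ^ 2 := by
      field_simp
    rw [hfield, hnorm] at h2'
    have hLinv : L⁻¹ * ‖f' a - f' b‖ ^ 2 - 1 / (2 * L) * ‖f' a - f' b‖ ^ 2
        = 1 / (2 * L) * ‖f' a - f' b‖ ^ 2 := by field_simp; ring
    nlinarith [h1, h2']
  have k1 := key x y
  have k2 := key y x
  have : ‖f' y - f' x‖ = ‖f' x - f' y‖ := by rw [← norm_neg]; congr 1; abel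
  rw [this] at k2
  have hinner2 : ⟪f' x, y - x⟫ + ⟪f' y, x - y⟫ = -⟪f' x - f' y, x - y⟫ := by
    rw [show (y - x : E) = -(x - y) by abel, inner_neg_right, inner_sub_left]
    ring
  have hsum : (1 / (2 * L)) * ‖f' x - f' y‖ ^ 2 * 2 ≤ ⟪f' x - f' y, x - y⟫ := by nlinarith
  have : 1 / (2 * L) * ‖f' x - f' y‖ ^ 2 * 2 = L⁻¹ * ‖f' x - f' y‖ ^ 2 := by field_simp
  rw [this] at hsum
  calc ‖f' x - f' y‖ ^ 2 = L * (L⁻¹ * ‖f' x - f' y‖ ^ 2) := by field_simp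
    _ ≤ L * ⟪f' x - f' y, x - y⟫ := by
        exact mul_le_mul_of_nonneg_left hsum hL.le
theorem stmt_3 (p n : ℕ) (hn : 0 < n)
    (f : Fin n → EuclideanSpace ℝ (Fin p) → ℝ)
    (f' : Fin n → EuclideanSpace ℝ (Fin p) → EuclideanSpace ℝ (Fin p))
    (hdiff : ∀ i x, HasGradientAt (f i) (f' i x) x)
    (L : ℝ) (hL : 0 < L)
    (hconv : ∀ i x y, f i x ≥ f i y + ⟪f' i y, x - y⟫)
    (hsmooth : ∀ i x y, ‖f' i x - f' i y‖ ≤ L * ‖x - y‖)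
    (xs : EuclideanSpace ℝ (Fin p))
    (hxs : (1 / n : ℝ) • ∑ i, f' i xs = 0) :
    ∀ x, (1 / n : ℝ) * ∑ i, (-2 * L * ⟪x - xs, f' i x⟫ + ‖f' i x‖^2)
      ≤ (2 / n : ℝ) * ∑ i, ‖f' i xs‖^2 := by
  intro x
  have hnR : (0:ℝ) < n := Nat.cast_pos.2 hn
  have hsum0 : ∑ i, f' i xs = 0 := by
    have h1 : (1 / n : ℝ) ≠ 0 := by positivity
    exact (smul_eq_zero.1 hxs).resolve_left h1
  have hterm : ∀ i, -2 * L * ⟪x - xs, f' i x⟫ + ‖f' i x‖^2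
      ≤ 2 * ‖f' i xs‖^2 - 2 * L * ⟪x - xs, f' i xs⟫ := by
    intro i
    have hco : ‖f' i x - f' i xs‖ ^ 2 ≤ L * ⟪f' i x - f' i xs, x - xs⟫ :=
      cocoercive (hdiff i) hL (hconv i) (hsmooth i) x xs
    have hexp : ⟪f' i x - f' i xs, x - xs⟫ = ⟪x - xs, f' i x⟫ - ⟪x - xs, f' i xs⟫ := by
      rw [real_inner_comm, inner_sub_right]
    have htri : ‖f' i x‖ ≤ ‖f' i x - f' i xs‖ + ‖f' i xs‖ := by
      simpa using norm_add_le (f' i x - f' i xs) (f' i xs)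
    have hsq : ‖f' i x‖^2 ≤ 2 * ‖f' i x - f' i xs‖^2 + 2 * ‖f' i xs‖^2 := by
      nlinarith [htri, sq_nonneg (‖f' i x - f' i xs‖ - ‖f' i xs‖), norm_nonneg (f' i x), norm_nonneg (f' i x - f' i xs), norm_nonneg (f' i xs), mul_self_nonneg (‖f' i x - f' i xs‖ + ‖f' i xs‖)]
    rw [hexp] at hco
    nlinarith
  have hsum : ∑ i, (-2 * L * ⟪x - xs, f' i x⟫ + ‖f' i x‖^2)
      ≤ ∑ i, (2 * ‖f' i xs‖^2 - 2 * L * ⟪x - xs, f' i xs⟫) :=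
    Finset.sum_le_sum fun i _ => hterm i
  have hinner0 : ∑ i, ⟪x - xs, f' i xs⟫ = 0 := by
    rw [← inner_sum, hsum0, inner_zero_right]
  have hRHS : ∑ i, (2 * ‖f' i xs‖^2 - 2 * L * ⟪x - xs, f' i xs⟫)
      = 2 * ∑ i, ‖f' i xs‖^2 := by
    rw [Finset.sum_sub_distrib, ← Finset.mul_sum]
    have : ∑ i, 2 * L * ⟪x - xs, f' i xs⟫ = 2 * L * ∑ i, ⟪x - xs, f' i xs⟫ := by
      rw [Finset.mul_sum]
    rw [this, hinner0, mul_zero, sub_zero]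
  rw [hRHS] at hsum
  have h1n : (0:ℝ) ≤ 1 / n := by positivity
  calc (1 / n : ℝ) * ∑ i, (-2 * L * ⟪x - xs, f' i x⟫ + ‖f' i x‖^2)
      ≤ (1 / n : ℝ) * (2 * ∑ i, ‖f' i xs‖^2) := mul_le_mul_of_nonneg_left hsum h1n
    _ = (2 / n : ℝ) * ∑ i, ‖f' i xs‖^2 := by ring
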